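/- arXiv:quant-ph/0308089 — 5 statements merged into one kernel-verified Lean document; each statement's English description precedes it below -/
import Mathlib

section
/- Let N ≥ 1 and k ≥ 1. Suppose Φ : Matrix (Fin N) (Fin N) ℂ → Matrix (Fin N) (Fin N) ℂ is given by Φ(ρ) = ∑_{j=1}^k ε_j • (A_j * ρ * A_jᴴ), where A_1, …, A_k are N×N complex matrices forming a linearly independent family and each ε_j ∈ {−1, 1}. Then Φ is completely positive if and only if ε_j = 1 for every j ∈ {1, …, k}. -/
open scoped ComplexOrder Matrix

/-- `Φ` is completely positive: for every `m ≥ 1`, the map `id_m ⊗ Φ` (acting blockwise on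
`m × m` block matrices with `N × N` blocks) maps positive semidefinite matrices to positive
semidefinite matrices. -/
def CompletelyPositive {N : ℕ}
    (Φ : Matrix (Fin N) (Fin N) ℂ → Matrix (Fin N) (Fin N) ℂ) : Prop :=
  ∀ m : ℕ, 1 ≤ m → ∀ M : Matrix (Fin m × Fin N) (Fin m × Fin N) ℂ, M.PosSemidef →
    (Matrix.of fun p q : Fin m × Fin N =>
      Φ (Matrix.of fun a b : Fin N => M (p.1, a) (q.1, b)) p.2 q.2).PosSemidef

/-! In Kraus form, `id_m ⊗ Φ` acts as `M ↦ ∑ ε_j (1 ⊗ A_j) M (1 ⊗ A_j)ᴴ`, so nonnegative weights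
give complete positivity. Conversely, applied to the maximally entangled state
`vec 1 (vec 1)ᴴ` it yields the Choi matrix `∑ ε_j vec A_j (vec A_j)ᴴ`. The vectors `vec A_j` are
linearly independent, so some vector is orthogonal to all of them except `vec A_j`; on it the
quadratic form of the Choi matrix sees only `ε_j`, which is therefore nonnegative. -/

open Matrix
open scoped Kronecker

section

variable {ι m n : Type*}

def ampliation (Φ : Matrix n n ℂ → Matrix n n ℂ) (M : Matrix (m × n) (m × n) ℂ) :
    Matrix (m × n) (m × n) ℂ :=
  of fun p q => Φ (of fun a b => M (p.1, a) (q.1, b)) p.2 q.2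

lemma ampliation_kraus [Fintype ι] [Fintype m] [Fintype n] [DecidableEq m]
    (A : ι → Matrix n n ℂ) (ε : ι → ℝ) (M : Matrix (m × n) (m × n) ℂ) :
    ampliation (fun ρ => ∑ j, ε j • (A j * ρ * (A j)ᴴ)) M
      = ∑ j, ε j • ((1 ⊗ₖ A j) * M * (1 ⊗ₖ A j)ᴴ) := by
  ext p q
  simp [ampliation, Matrix.sum_apply, mul_apply, Fintype.sum_prod_type, one_apply,
    Finset.sum_mul, ite_mul, mul_ite, apply_ite (starRingEnd ℂ), Finset.sum_ite_irrel]

lemma mul_vecMulVec_star_mul_conjTranspose [Fintype n] (B : Matrix m n ℂ) (u : n → ℂ) :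
    B * vecMulVec u (star u) * Bᴴ = vecMulVec (B *ᵥ u) (star (B *ᵥ u)) := by
  rw [mul_vecMulVec, vecMulVec_mul, star_mulVec]

lemma dotProduct_vecMulVec_star_mulVec_star [Fintype n] (c v : n → ℂ) :
    c ⬝ᵥ (vecMulVec v (star v) *ᵥ star c) = (c ⬝ᵥ v) * star (c ⬝ᵥ v) := by
  rw [dotProduct_mulVec, vecMul_vecMulVec, smul_dotProduct, star_dotProduct_star, smul_eq_mul]

lemma nonneg_of_posSemidef_sum_smul_vecMulVec [Fintype ι] [Fintype n] {v : ι → n → ℂ}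
    (hv : LinearIndependent ℂ v) {ε : ι → ℝ}
    (h : (∑ i, ε i • vecMulVec (v i) (star (v i))).PosSemidef) (j : ι) : 0 ≤ ε j := by
  classical
  obtain ⟨f, hfj, hf⟩ := Submodule.exists_dual_map_eq_bot_of_notMem
    (hv.notMem_span_image (s := {i | i ≠ j}) (x := j) (by simp)) inferInstance
  have hfi : ∀ i ≠ j, f (v i) = 0 := fun i hi => by
    simpa [hf] using Submodule.mem_map_of_mem (f := f)
      (Submodule.subset_span (Set.mem_image_of_mem v (show i ∈ {i | i ≠ j} from hi)))
  set c := (dotProductEquiv ℂ n).symm f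
  have hc : ∀ w, c ⬝ᵥ w = f w := fun w => by
    rw [← dotProductEquiv_apply_apply, LinearEquiv.apply_symm_apply]
  have hq := h.dotProduct_mulVec_nonneg (star c)
  simp only [star_star, sum_mulVec, dotProduct_sum, smul_mulVec, dotProduct_smul,
    dotProduct_vecMulVec_star_mulVec_star] at hq
  simp only [hc] at hq
  rw [Finset.sum_eq_single j (fun i _ hi => by simp [hfi i hi]) (by simp), Complex.star_def,
    Complex.mul_conj, Complex.real_smul, ← Complex.ofReal_mul, Complex.zero_le_real] at hq
  exact nonneg_of_mul_nonneg_left hq (Complex.normSq_pos.2 hfj)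

lemma linearIndependent_vec {A : ι → Matrix m n ℂ} (hA : LinearIndependent ℂ A) :
    LinearIndependent ℂ fun i => vec (A i) :=
  hA.map' { toFun := vec, map_add' := vec_add, map_smul' := vec_smul }
    (LinearMap.ker_eq_bot.2 vec_bijective.1)

end

lemma completelyPositive_iff_ampliation {N : ℕ}
    (Φ : Matrix (Fin N) (Fin N) ℂ → Matrix (Fin N) (Fin N) ℂ) :
    CompletelyPositive Φ ↔
      ∀ m : ℕ, 1 ≤ m → ∀ M : Matrix (Fin m × Fin N) (Fin m × Fin N) ℂ, M.PosSemidef →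
        (ampliation Φ M).PosSemidef :=
  Iff.rfl

lemma completelyPositive_of_nonneg {N : ℕ} {ι : Type*} [Fintype ι]
    (A : ι → Matrix (Fin N) (Fin N) ℂ) {ε : ι → ℝ} (hε : ∀ j, 0 ≤ ε j) :
    CompletelyPositive fun ρ => ∑ j, ε j • (A j * ρ * (A j)ᴴ) := by
  rw [completelyPositive_iff_ampliation]
  intro m _ M hM
  rw [ampliation_kraus]
  exact posSemidef_sum _ fun j _ => (hM.mul_mul_conjTranspose_same _).smul (hε j)

lemma nonneg_of_completelyPositive {N : ℕ} (hN : 1 ≤ N) {ι : Type*} [Fintype ι]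
    {A : ι → Matrix (Fin N) (Fin N) ℂ} (hA : LinearIndependent ℂ A) {ε : ι → ℝ}
    (hCP : CompletelyPositive fun ρ => ∑ j, ε j • (A j * ρ * (A j)ᴴ)) (j : ι) : 0 ≤ ε j := by
  rw [completelyPositive_iff_ampliation] at hCP
  have hChoi := hCP N hN _ (posSemidef_vecMulVec_self_star (vec (1 : Matrix (Fin N) (Fin N) ℂ)))
  simp_rw [ampliation_kraus, mul_vecMulVec_star_mul_conjTranspose, ← vec_mul_eq_mulVec,
    Matrix.mul_one] at hChoi
  exact nonneg_of_posSemidef_sum_smul_vecMulVec (linearIndependent_vec hA) hChoi j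

theorem stmt_0_general (N k : ℕ) (hN : 1 ≤ N)
    (A : Fin k → Matrix (Fin N) (Fin N) ℂ) (hA : LinearIndependent ℂ A)
    (ε : Fin k → ℝ) (hε : ∀ j, ε j = 1 ∨ ε j = -1)
    (Φ : Matrix (Fin N) (Fin N) ℂ → Matrix (Fin N) (Fin N) ℂ)
    (hΦ : ∀ ρ, Φ ρ = ∑ j, ε j • (A j * ρ * (A j)ᴴ)) :
    CompletelyPositive Φ ↔ ∀ j, ε j = 1 := by
  obtain rfl : Φ = _ := funext hΦ
  refine ⟨fun hCP j => ?_, fun h => completelyPositive_of_nonneg A fun j => by simp [h j]⟩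
  have := nonneg_of_completelyPositive hN hA hCP j
  rcases hε j with h | h
  · exact h
  · linarith

theorem stmt_0 (N k : ℕ) (hN : 1 ≤ N) (hk : 1 ≤ k)
    (A : Fin k → Matrix (Fin N) (Fin N) ℂ) (hA : LinearIndependent ℂ A)
    (ε : Fin k → ℝ) (hε : ∀ j, ε j = 1 ∨ ε j = -1)
    (Φ : Matrix (Fin N) (Fin N) ℂ → Matrix (Fin N) (Fin N) ℂ)
    (hΦ : ∀ ρ, Φ ρ = ∑ j, ε j • (A j * ρ * (A j)ᴴ)) :
    CompletelyPositive Φ ↔ ∀ j, ε j = 1 :=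
  stmt_0_general N k hN A hA ε hε Φ hΦ
end

section
/- Let β_0, β_1, β_2, β_3 be real numbers and define Φ : Matrix (Fin 2) (Fin 2) ℂ → Matrix (Fin 2) (Fin 2) ℂ by Φ(ρ) = ∑_{i=0}^3 β_i • (σ_i * ρ * σ_i). Then Φ is positive (i.e., maps positive semidefinite 2×2 matrices to positive semidefinite matrices) if and only if every pair from {β_0, β_1, β_2, β_3} sums to a nonnegative number, i.e., β_0 + β_1 ≥ 0, β_0 + β_2 ≥ 0, β_0 + β_3 ≥ 0, β_1 + β_2 ≥ 0, β_1 + β_3 ≥ 0, and β_2 + β_3 ≥ 0. -/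
/-!
Write a Hermitian 2×2 matrix as `ρ = ∑ rⱼ σⱼ`. Its trace is `2 r₀` and its determinant
`r₀² - r₁² - r₂² - r₃²`, so `ρ ≥ 0` iff `r` lies in the forward light cone. Since
`σᵢ σⱼ σᵢ = ±σⱼ`, the map `Φ` acts diagonally on `r` with eigenvalues
`λ₀ = β₀ + β₁ + β₂ + β₃`, `λ₁ = β₀ + β₁ - β₂ - β₃`, `λ₂ = β₀ - β₁ + β₂ - β₃`,
`λ₃ = β₀ - β₁ - β₂ + β₃`.
A diagonal map preserves the light cone iff `|λⱼ| ≤ λ₀` for `j = 1, 2, 3`, and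
`λ₀ ± λⱼ` are exactly twice the pair sums of the `βᵢ`.
-/

open scoped ComplexOrder Matrix

/-- The Pauli matrices `σ_0, σ_1, σ_2, σ_3`. -/
def pauli : Fin 4 → Matrix (Fin 2) (Fin 2) ℂ :=
  ![!![1, 0; 0, 1], !![0, 1; 1, 0], !![0, -Complex.I; Complex.I, 0], !![1, 0; 0, -1]]

open Matrix Complex

theorem Matrix.IsHermitian.posSemidef_iff_of_fin_two {𝕜 : Type*} [RCLike 𝕜]
    {A : Matrix (Fin 2) (Fin 2) 𝕜} (hA : A.IsHermitian) :
    A.PosSemidef ↔ 0 ≤ A.trace ∧ 0 ≤ A.det := by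
  refine ⟨fun h => ⟨h.trace_nonneg, h.det_nonneg⟩, fun ⟨htr, hdet⟩ => ?_⟩
  rw [hA.trace_eq_sum_eigenvalues, Fin.sum_univ_two, ← RCLike.ofReal_add,
    RCLike.ofReal_nonneg] at htr
  rw [hA.det_eq_prod_eigenvalues, Fin.prod_univ_two, ← RCLike.ofReal_mul,
    RCLike.ofReal_nonneg] at hdet
  rw [hA.posSemidef_iff_eigenvalues_nonneg, Pi.le_def, Fin.forall_fin_two]
  simp only [Pi.zero_apply]
  constructor <;> nlinarith

def blochMatrix (r : Fin 4 → ℝ) : Matrix (Fin 2) (Fin 2) ℂ := ∑ j, (r j : ℂ) • pauli j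

theorem blochMatrix_eq (r : Fin 4 → ℝ) :
    blochMatrix r = !![(r 0 + r 3 : ℂ), r 1 - r 2 * I; r 1 + r 2 * I, r 0 - r 3] := by
  ext i j
  fin_cases i <;> fin_cases j <;> simp [blochMatrix, pauli, Fin.sum_univ_four] <;> ring

theorem isHermitian_blochMatrix (r : Fin 4 → ℝ) : (blochMatrix r).IsHermitian := by
  rw [blochMatrix_eq]
  ext i j
  fin_cases i <;> fin_cases j <;> simp [Complex.ext_iff]

theorem trace_blochMatrix (r : Fin 4 → ℝ) : (blochMatrix r).trace = 2 * r 0 := by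
  rw [blochMatrix_eq, trace_fin_two_of]
  ring

theorem det_blochMatrix (r : Fin 4 → ℝ) :
    (blochMatrix r).det = ((r 0 ^ 2 - (r 1 ^ 2 + r 2 ^ 2 + r 3 ^ 2) : ℝ) : ℂ) := by
  rw [blochMatrix_eq, det_fin_two_of]
  push_cast
  ring_nf
  simp only [I_sq]
  ring

theorem Matrix.IsHermitian.exists_eq_blochMatrix {ρ : Matrix (Fin 2) (Fin 2) ℂ}
    (hρ : ρ.IsHermitian) : ∃ r, ρ = blochMatrix r := by
  refine ⟨![((ρ 0 0).re + (ρ 1 1).re) / 2, (ρ 1 0).re, (ρ 1 0).im,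
    ((ρ 0 0).re - (ρ 1 1).re) / 2], ?_⟩
  have h00 : (ρ 0 0).im = 0 := conj_eq_iff_im.1 (hρ.apply 0 0)
  have h11 : (ρ 1 1).im = 0 := conj_eq_iff_im.1 (hρ.apply 1 1)
  rw [blochMatrix_eq]
  ext i j
  fin_cases i <;> fin_cases j <;> simp [Complex.ext_iff, h00, h11, ← hρ.apply 0 1] <;> ring

def forwardLightCone : Set (Fin 4 → ℝ) :=
  {r | 0 ≤ r 0 ∧ r 1 ^ 2 + r 2 ^ 2 + r 3 ^ 2 ≤ r 0 ^ 2}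

theorem posSemidef_blochMatrix_iff {r : Fin 4 → ℝ} :
    (blochMatrix r).PosSemidef ↔ r ∈ forwardLightCone := by
  rw [(isHermitian_blochMatrix r).posSemidef_iff_of_fin_two, trace_blochMatrix, det_blochMatrix,
    ← ofReal_ofNat, ← ofReal_mul, zero_le_real, zero_le_real, forwardLightCone,
    Set.mem_ofPred_eq]
  constructor <;> rintro ⟨h0, h1⟩ <;> constructor <;> linarith

def pauliSign (i j : Fin 4) : ℝ := if i = 0 ∨ j = 0 ∨ i = j then 1 else -1

theorem pauli_mul_pauli_mul_pauli (i j : Fin 4) :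
    pauli i * pauli j * pauli i = (pauliSign i j : ℂ) • pauli j := by
  fin_cases i <;> fin_cases j <;> ext a b <;> fin_cases a <;> fin_cases b <;>
    simp [pauli, pauliSign]

def pauliChannelEigenvalues (β : Fin 4 → ℝ) (j : Fin 4) : ℝ := ∑ i, pauliSign i j * β i

theorem pauliChannelEigenvalues_eq (β : Fin 4 → ℝ) :
    pauliChannelEigenvalues β = ![β 0 + β 1 + β 2 + β 3, β 0 + β 1 - β 2 - β 3,
      β 0 - β 1 + β 2 - β 3, β 0 - β 1 - β 2 + β 3] := by
  ext j
  fin_cases j <;> simp +decide [pauliChannelEigenvalues, pauliSign, Fin.sum_univ_four] <;> ring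

theorem sum_smul_pauli_mul_blochMatrix_mul_pauli (β r : Fin 4 → ℝ) :
    ∑ i, β i • (pauli i * blochMatrix r * pauli i) =
      blochMatrix (pauliChannelEigenvalues β * r) := by
  simp only [blochMatrix, Finset.mul_sum, Finset.sum_mul, mul_smul_comm, smul_mul_assoc,
    pauli_mul_pauli_mul_pauli, Finset.smul_sum, smul_smul, pauliChannelEigenvalues, Pi.mul_apply]
  rw [Finset.sum_comm]
  refine Finset.sum_congr rfl fun j _ => ?_
  rw [Complex.ofReal_sum, Finset.sum_smul]
  refine Finset.sum_congr rfl fun i _ => ?_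
  rw [← Complex.coe_smul, smul_smul]
  push_cast
  ring_nf

theorem mapsTo_mul_forwardLightCone_iff (μ : Fin 4 → ℝ) :
    Set.MapsTo (μ * ·) forwardLightCone forwardLightCone ↔
      |μ 1| ≤ μ 0 ∧ |μ 2| ≤ μ 0 ∧ |μ 3| ≤ μ 0 := by
  constructor
  · intro h
    have h1 := h (x := ![1, 1, 0, 0]) (by simp [forwardLightCone])
    have h2 := h (x := ![1, 0, 1, 0]) (by simp [forwardLightCone])
    have h3 := h (x := ![1, 0, 0, 1]) (by simp [forwardLightCone])
    simp only [forwardLightCone, Set.mem_ofPred_eq, Pi.mul_apply, cons_val_zero, cons_val_one,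
      cons_val, mul_one, mul_zero, zero_pow two_ne_zero, add_zero, zero_add] at h1 h2 h3
    exact ⟨abs_le_of_sq_le_sq h1.2 h1.1, abs_le_of_sq_le_sq h2.2 h1.1,
      abs_le_of_sq_le_sq h3.2 h1.1⟩
  · rintro ⟨h1, h2, h3⟩ r ⟨hr0, hr⟩
    have h1' := sq_le_sq' (abs_le.1 h1).1 (abs_le.1 h1).2
    have h2' := sq_le_sq' (abs_le.1 h2).1 (abs_le.1 h2).2
    have h3' := sq_le_sq' (abs_le.1 h3).1 (abs_le.1 h3).2
    refine ⟨mul_nonneg ((abs_nonneg _).trans h1) hr0, ?_⟩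
    simp only [Pi.mul_apply, mul_pow]
    nlinarith [mul_le_mul_of_nonneg_right h1' (sq_nonneg (r 1)),
      mul_le_mul_of_nonneg_right h2' (sq_nonneg (r 2)),
      mul_le_mul_of_nonneg_right h3' (sq_nonneg (r 3)),
      mul_le_mul_of_nonneg_left hr (sq_nonneg (μ 0))]

theorem posSemidef_pauliChannel_iff (β : Fin 4 → ℝ) :
    (∀ ρ : Matrix (Fin 2) (Fin 2) ℂ, ρ.PosSemidef →
      (∑ i, β i • (pauli i * ρ * pauli i)).PosSemidef) ↔
      Set.MapsTo (pauliChannelEigenvalues β * ·) forwardLightCone forwardLightCone := by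
  constructor
  · intro h r hr
    rw [← posSemidef_blochMatrix_iff, ← sum_smul_pauli_mul_blochMatrix_mul_pauli]
    exact h _ (posSemidef_blochMatrix_iff.2 hr)
  · intro h ρ hρ
    obtain ⟨r, rfl⟩ := hρ.isHermitian.exists_eq_blochMatrix
    rw [sum_smul_pauli_mul_blochMatrix_mul_pauli, posSemidef_blochMatrix_iff]
    exact h (posSemidef_blochMatrix_iff.1 hρ)

theorem stmt_2 (β : Fin 4 → ℝ)
    (Φ : Matrix (Fin 2) (Fin 2) ℂ → Matrix (Fin 2) (Fin 2) ℂ)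
    (hΦ : ∀ ρ, Φ ρ = ∑ i, β i • (pauli i * ρ * pauli i)) :
    (∀ ρ : Matrix (Fin 2) (Fin 2) ℂ, ρ.PosSemidef → (Φ ρ).PosSemidef) ↔
      (0 ≤ β 0 + β 1 ∧ 0 ≤ β 0 + β 2 ∧ 0 ≤ β 0 + β 3 ∧
       0 ≤ β 1 + β 2 ∧ 0 ≤ β 1 + β 3 ∧ 0 ≤ β 2 + β 3) := by
  simp_rw [hΦ]
  rw [posSemidef_pauliChannel_iff, mapsTo_mul_forwardLightCone_iff]
  simp only [pauliChannelEigenvalues_eq, abs_le, cons_val_zero, cons_val_one, cons_val]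
  constructor
  · rintro ⟨⟨h1, h1'⟩, ⟨h2, h2'⟩, ⟨h3, h3'⟩⟩
    refine ⟨?_, ?_, ?_, ?_, ?_, ?_⟩ <;> linarith
  · rintro ⟨h01, h02, h03, h12, h13, h23⟩
    refine ⟨⟨?_, ?_⟩, ⟨?_, ?_⟩, ⟨?_, ?_⟩⟩ <;> linarith
end

section
/- Let M be a 3×3 matrix with real entries. Then there exist 3×3 real matrices A and B with AᵀA = 1, det A = 1, BᵀB = 1, det B = 1, and a function d : Fin 3 → ℝ, such that M = B * Matrix.diagonal d * A, and such that: if det M ≥ 0 then d₀ ≥ d₁ ≥ d₂ ≥ 0 and d₀, d₁, d₂ are the singular values of M (i.e., d_i² are the eigenvalues of MᵀM); while if det M < 0 then 0 ≥ d₀ ≥ d₁ ≥ d₂ and −d₀, −d₁, −d₂ are the singular values of M listed in increasing order. -/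
/-!
Take a singular value decomposition `M = U Σ V` with `U, V` orthogonal and `Σ = diag σ`,
`σ₀ ≥ σ₁ ≥ σ₂ ≥ 0`; it comes from diagonalising `MᵀM` and normalising the (orthogonal) columns
of `M` in the eigenbasis. Then `det M = det U · det V · ∏ σᵢ` with `det U · det V = ±1`. In odd
dimension `-1` has determinant `-1`, so `(U, V)` can be replaced by `(-U, -V)`: it only remains to
arrange `det U · det V = 1`. If `det M ≥ 0` and `det U · det V = -1`, some `σᵢ` vanishes and
flipping the `i`-th column of `U` fixes the sign. If `det M < 0`, reverse the order of the `σᵢ`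
and write `M = (-U) diag(-σ) V`.
-/

open scoped Matrix
open Polynomial

namespace Matrix

variable {n : Type*} [Fintype n] [DecidableEq n]

section CommRing

variable {R : Type*} [CommRing R]

theorem neg_mem_orthogonalGroup {U : Matrix n n R} (hU : U ∈ orthogonalGroup n R) :
    -U ∈ orthogonalGroup n R := by
  rw [mem_orthogonalGroup_iff'] at hU ⊢
  rwa [transpose_neg, neg_mul_neg]

theorem submatrix_mem_orthogonalGroup {U : Matrix n n R} (hU : U ∈ orthogonalGroup n R)
    (e₁ e₂ : Equiv.Perm n) : U.submatrix e₁ e₂ ∈ orthogonalGroup n R := by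
  rw [mem_orthogonalGroup_iff'] at hU ⊢
  rw [transpose_submatrix, submatrix_mul_equiv, hU, submatrix_one_equiv]

theorem det_neg_of_odd_card (hn : Odd (Fintype.card n)) (A : Matrix n n R) :
    (-A).det = -A.det := by
  rw [det_neg, hn.neg_one_pow, neg_one_mul]

theorem mul_diagonal_mul_eq_submatrix (U V : Matrix n n R) (d : n → R) (e : Equiv.Perm n) :
    U * diagonal d * V = U.submatrix id e * diagonal (d ∘ e) * V.submatrix e id := by
  rw [← submatrix_diagonal_equiv, submatrix_mul_equiv, submatrix_mul_equiv, submatrix_id_id]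

theorem charpoly_transpose_mul_self_of_eq_mul_diagonal_mul {M B A : Matrix n n R} {d : n → R}
    (hB : B ∈ orthogonalGroup n R) (hA : A ∈ orthogonalGroup n R)
    (hM : M = B * diagonal d * A) :
    (Mᵀ * M).charpoly = ∏ i, (X - C (d i ^ 2)) := by
  rw [mem_orthogonalGroup_iff'] at hB
  rw [mem_orthogonalGroup_iff] at hA
  have hMM : Mᵀ * M = Aᵀ * (diagonal d * diagonal d * A) := by
    rw [hM, transpose_mul, transpose_mul, diagonal_transpose]
    simp only [Matrix.mul_assoc]
    rw [← Matrix.mul_assoc Bᵀ, hB, Matrix.one_mul]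
  rw [hMM, charpoly_mul_comm, Matrix.mul_assoc, hA, Matrix.mul_one, diagonal_mul_diagonal,
    charpoly_diagonal]
  simp only [sq]

end CommRing

theorem det_eq_one_or_neg_one_of_mem_orthogonalGroup {U : Matrix n n ℝ}
    (hU : U ∈ orthogonalGroup n ℝ) : U.det = 1 ∨ U.det = -1 :=
  Unitary.mem_iff_eq_one_or_eq_neg_one.mp (det_of_mem_unitary hU)

theorem det_mul_det_eq_one_or_neg_one {U V : Matrix n n ℝ} (hU : U ∈ orthogonalGroup n ℝ)
    (hV : V ∈ orthogonalGroup n ℝ) : U.det * V.det = 1 ∨ U.det * V.det = -1 := by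
  rw [← det_mul]
  exact det_eq_one_or_neg_one_of_mem_orthogonalGroup (Submonoid.mul_mem _ hU hV)

theorem det_mul_diagonal_mul (U V : Matrix n n ℝ) (σ : n → ℝ) :
    (U * diagonal σ * V).det = U.det * V.det * ∏ i, σ i := by
  rw [det_mul, det_mul, det_diagonal]
  ring

theorem exists_mem_orthogonalGroup_mul_diagonal_eq {N : Matrix n n ℝ} {σ : n → ℝ}
    (hN : Nᵀ * N = diagonal fun i => σ i ^ 2) :
    ∃ U ∈ orthogonalGroup n ℝ, U * diagonal σ = N := by
  let c : n → EuclideanSpace ℝ n := fun i => WithLp.toLp 2 (Nᵀ i)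
  have hc : ∀ i j, inner ℝ (c i) (c j) = if i = j then σ i ^ 2 else 0 := by
    intro i j
    have hij := congrFun (congrFun hN i) j
    rw [mul_apply, diagonal_apply] at hij
    rw [EuclideanSpace.inner_toLp_toLp, ← hij, dotProduct]
    simp [mul_comm]
  have hv : Orthonormal ℝ ({i | σ i ≠ 0}.domRestrict fun i => (σ i)⁻¹ • c i) := by
    rw [orthonormal_iff_ite]
    rintro ⟨i, hi⟩ ⟨j, hj⟩
    simp only [Set.domRestrict_apply, inner_smul_left, inner_smul_right, hc, Subtype.mk.injEq]
    split_ifs with hij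
    · subst hij
      rw [conj_trivial, ← mul_assoc, ← sq, inv_pow, inv_mul_cancel₀ (pow_ne_zero 2 hi)]
    · simp
  obtain ⟨b, hb⟩ := hv.exists_orthonormalBasis_extension_of_card_eq (by simp)
  refine ⟨(EuclideanSpace.basisFun n ℝ).toBasis.toMatrix b,
    (EuclideanSpace.basisFun n ℝ).toMatrix_orthonormalBasis_mem_orthogonal b, ?_⟩
  ext r i
  rw [mul_diagonal, Module.Basis.toMatrix_apply]
  simp only [OrthonormalBasis.coe_toBasis_repr_apply, EuclideanSpace.basisFun_repr]
  by_cases hi : σ i = 0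
  · have hci : c i = 0 := by
      rw [← inner_self_eq_zero (𝕜 := ℝ), hc, if_pos rfl, hi]
      simp
    rw [hi, mul_zero]
    exact (congrArg (· r) hci).symm
  · rw [hb i hi]
    simp only [c, PiLp.smul_apply, smul_eq_mul, transpose_apply]
    field_simp

theorem exists_svd (M : Matrix n n ℝ) :
    ∃ U ∈ orthogonalGroup n ℝ, ∃ V ∈ orthogonalGroup n ℝ, ∃ σ : n → ℝ,
      0 ≤ σ ∧ M = U * diagonal σ * V := by
  have hS : (Mᵀ * M).PosSemidef := by
    simpa [conjTranspose_eq_transpose_of_trivial] using posSemidef_conjTranspose_mul_self M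
  set W : Matrix n n ℝ := (hS.1.eigenvectorUnitary : Matrix n n ℝ)
  have hW : W * Wᵀ = 1 := (mem_orthogonalGroup_iff _ _).mp hS.1.eigenvectorUnitary.2
  set μ := hS.1.eigenvalues
  have hdiag : Wᵀ * (Mᵀ * M) * W = diagonal μ := by
    have := hS.1.conjStarAlgAut_star_eigenvectorUnitary
    rwa [Unitary.conjStarAlgAut_star_apply, star_eq_conjTranspose,
      conjTranspose_eq_transpose_of_trivial] at this
  have hsq : (fun i => √(μ i) ^ 2) = μ := funext fun i => Real.sq_sqrt (hS.eigenvalues_nonneg i)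
  obtain ⟨U, hU, hUσ⟩ := exists_mem_orthogonalGroup_mul_diagonal_eq (N := M * W)
    (σ := fun i => √(μ i)) (by rw [hsq, ← hdiag, transpose_mul]; simp only [Matrix.mul_assoc])
  refine ⟨U, hU, Wᵀ, (mem_orthogonalGroup_iff' _ _).mpr (by rwa [transpose_transpose]),
    fun i => √(μ i), fun i => Real.sqrt_nonneg _, ?_⟩
  rw [hUσ, Matrix.mul_assoc, hW, Matrix.mul_one]

theorem exists_svd_antitone {k : ℕ} (M : Matrix (Fin k) (Fin k) ℝ) :
    ∃ U ∈ orthogonalGroup (Fin k) ℝ, ∃ V ∈ orthogonalGroup (Fin k) ℝ, ∃ σ : Fin k → ℝ,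
      0 ≤ σ ∧ Antitone σ ∧ M = U * diagonal σ * V := by
  obtain ⟨U, hU, V, hV, σ, hσ, rfl⟩ := exists_svd M
  let e : Equiv.Perm (Fin k) := Fin.revPerm.trans (Tuple.sort σ)
  exact ⟨U.submatrix id e, submatrix_mem_orthogonalGroup hU 1 e, V.submatrix e id,
    submatrix_mem_orthogonalGroup hV e 1, σ ∘ e, fun i => hσ (e i),
    (Tuple.monotone_sort σ).comp_antitone Fin.rev_anti, mul_diagonal_mul_eq_submatrix U V σ e⟩

theorem exists_mem_specialOrthogonalGroup_mul_mul_eq (hn : Odd (Fintype.card n))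
    {U V : Matrix n n ℝ} (hU : U ∈ orthogonalGroup n ℝ) (hV : V ∈ orthogonalGroup n ℝ)
    (hUV : U.det * V.det = 1) (D : Matrix n n ℝ) :
    ∃ B ∈ specialOrthogonalGroup n ℝ, ∃ A ∈ specialOrthogonalGroup n ℝ,
      U * D * V = B * D * A := by
  rcases det_eq_one_or_neg_one_of_mem_orthogonalGroup hU with hdU | hdU
  · refine ⟨U, ⟨hU, hdU⟩, V, ⟨hV, ?_⟩, rfl⟩
    simpa [hdU] using hUV
  · have hdV : V.det = -1 := by rw [hdU] at hUV; linarith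
    refine ⟨-U, mem_specialOrthogonalGroup_iff.mpr ⟨neg_mem_orthogonalGroup hU, ?_⟩,
      -V, mem_specialOrthogonalGroup_iff.mpr ⟨neg_mem_orthogonalGroup hV, ?_⟩, ?_⟩
    · rw [det_neg_of_odd_card hn, hdU, neg_neg]
    · rw [det_neg_of_odd_card hn, hdV, neg_neg]
    · rw [neg_mul, neg_mul, mul_neg, neg_neg]

theorem exists_mem_orthogonalGroup_det_eq_neg_mul_diagonal_eq {U : Matrix n n ℝ}
    (hU : U ∈ orthogonalGroup n ℝ) {σ : n → ℝ} {i : n} (hi : σ i = 0) :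
    ∃ U' ∈ orthogonalGroup n ℝ, U'.det = -U.det ∧ U' * diagonal σ = U * diagonal σ := by
  set ε : n → ℝ := Function.update 1 i (-1)
  have hεε : (fun j => ε j * ε j) = fun _ => 1 := by
    ext j; rcases eq_or_ne j i with rfl | hj <;> simp [ε, *]
  have hεσ : (fun j => ε j * σ j) = σ := by
    ext j; rcases eq_or_ne j i with rfl | hj <;> simp [ε, *]
  refine ⟨U * diagonal ε, Submonoid.mul_mem _ hU ?_, ?_, ?_⟩
  · rw [mem_orthogonalGroup_iff', diagonal_transpose, diagonal_mul_diagonal, hεε, diagonal_one]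
  · rw [det_mul, det_diagonal, Finset.prod_update_of_mem (Finset.mem_univ i)]
    simp
  · rw [mul_assoc, diagonal_mul_diagonal, hεσ]

theorem exists_mem_specialOrthogonalGroup_mul_diagonal_mul_eq_of_det_nonneg
    (hn : Odd (Fintype.card n)) {U V : Matrix n n ℝ} (hU : U ∈ orthogonalGroup n ℝ)
    (hV : V ∈ orthogonalGroup n ℝ) {σ : n → ℝ} (hσ : 0 ≤ σ)
    (hM : 0 ≤ (U * diagonal σ * V).det) :
    ∃ B ∈ specialOrthogonalGroup n ℝ, ∃ A ∈ specialOrthogonalGroup n ℝ,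
      U * diagonal σ * V = B * diagonal σ * A := by
  suffices ∃ U' ∈ orthogonalGroup n ℝ, U'.det * V.det = 1 ∧ U' * diagonal σ = U * diagonal σ by
    obtain ⟨U', hU', hdet, hU'σ⟩ := this
    rw [← hU'σ]
    exact exists_mem_specialOrthogonalGroup_mul_mul_eq hn hU' hV hdet _
  rcases det_mul_det_eq_one_or_neg_one hU hV with h | h
  · exact ⟨U, hU, h, rfl⟩
  · have hprod : ∏ i, σ i = 0 := by
      rw [det_mul_diagonal_mul, h] at hM
      linarith [Finset.prod_nonneg fun i (_ : i ∈ Finset.univ) => hσ i]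
    obtain ⟨i, -, hi⟩ := Finset.prod_eq_zero_iff.mp hprod
    obtain ⟨U', hU', hdet, hU'σ⟩ := exists_mem_orthogonalGroup_det_eq_neg_mul_diagonal_eq hU hi
    exact ⟨U', hU', by rw [hdet, neg_mul, h, neg_neg], hU'σ⟩

theorem exists_mem_specialOrthogonalGroup_mul_diagonal_mul_eq_of_det_neg {k : ℕ} (hk : Odd k)
    {U V : Matrix (Fin k) (Fin k) ℝ} (hU : U ∈ orthogonalGroup (Fin k) ℝ)
    (hV : V ∈ orthogonalGroup (Fin k) ℝ) {σ : Fin k → ℝ} (hσ : 0 ≤ σ)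
    (hM : (U * diagonal σ * V).det < 0) :
    ∃ B ∈ specialOrthogonalGroup (Fin k) ℝ, ∃ A ∈ specialOrthogonalGroup (Fin k) ℝ,
      U * diagonal σ * V = B * diagonal (-(σ ∘ Fin.rev)) * A := by
  rw [mul_diagonal_mul_eq_submatrix U V σ Fin.revPerm] at hM ⊢
  set U' := U.submatrix id Fin.revPerm
  set V' := V.submatrix Fin.revPerm id
  have hU' : U' ∈ orthogonalGroup (Fin k) ℝ := submatrix_mem_orthogonalGroup hU 1 _
  have hV' : V' ∈ orthogonalGroup (Fin k) ℝ := submatrix_mem_orthogonalGroup hV _ 1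
  have hk' : Odd (Fintype.card (Fin k)) := by rwa [Fintype.card_fin]
  have hdet : U'.det * V'.det = -1 := by
    refine (det_mul_det_eq_one_or_neg_one hU' hV').resolve_left fun h => hM.not_ge ?_
    rw [det_mul_diagonal_mul, h, one_mul]
    exact Finset.prod_nonneg fun i _ => hσ _
  obtain ⟨B, hB, A, hA, h⟩ := exists_mem_specialOrthogonalGroup_mul_mul_eq hk'
    (neg_mem_orthogonalGroup hU') hV' (by rw [det_neg_of_odd_card hk', neg_mul, hdet, neg_neg])
    (diagonal (-(σ ∘ Fin.rev)))
  refine ⟨B, hB, A, hA, ?_⟩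
  rw [← h, neg_mul, ← mul_neg, diagonal_neg]
  simp only [Pi.neg_apply, neg_neg]
  rfl

end Matrix

theorem stmt_3 (M : Matrix (Fin 3) (Fin 3) ℝ) :
    ∃ (A B : Matrix (Fin 3) (Fin 3) ℝ) (d : Fin 3 → ℝ),
      Aᵀ * A = 1 ∧ A.det = 1 ∧ Bᵀ * B = 1 ∧ B.det = 1 ∧
      M = B * Matrix.diagonal d * A ∧
      -- the |d i| are the singular values of M: the eigenvalues of MᵀM, counted with
      -- multiplicity, are the (d i)²
      (Mᵀ * M).charpoly = ∏ i : Fin 3, (X - C (d i ^ 2)) ∧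
      -- if det M ≥ 0, then d₀ ≥ d₁ ≥ d₂ ≥ 0 are the singular values in decreasing order
      (0 ≤ M.det → 0 ≤ d 2 ∧ d 1 ≤ d 0 ∧ d 2 ≤ d 1) ∧
      -- if det M < 0, then 0 ≥ d₀ ≥ d₁ ≥ d₂, so that −d₀ ≤ −d₁ ≤ −d₂ are the singular
      -- values in increasing order
      (M.det < 0 → d 0 ≤ 0 ∧ d 1 ≤ d 0 ∧ d 2 ≤ d 1) := by
  obtain ⟨U, hU, V, hV, σ, hσ, hanti, rfl⟩ := Matrix.exists_svd_antitone M
  rcases le_or_gt 0 (U * Matrix.diagonal σ * V).det with hM | hM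
  · obtain ⟨B, hB, A, hA, h⟩ :=
      Matrix.exists_mem_specialOrthogonalGroup_mul_diagonal_mul_eq_of_det_nonneg (by decide)
        hU hV hσ hM
    refine ⟨A, B, σ, (Matrix.mem_orthogonalGroup_iff' _ _).mp hA.1, hA.2,
      (Matrix.mem_orthogonalGroup_iff' _ _).mp hB.1, hB.2, h,
      Matrix.charpoly_transpose_mul_self_of_eq_mul_diagonal_mul hB.1 hA.1 h,
      fun _ => ⟨hσ 2, hanti (by decide), hanti (by decide)⟩, fun h' => (h'.not_ge hM).elim⟩
  · obtain ⟨B, hB, A, hA, h⟩ :=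
      Matrix.exists_mem_specialOrthogonalGroup_mul_diagonal_mul_eq_of_det_neg (by decide)
        hU hV hσ hM
    refine ⟨A, B, -(σ ∘ Fin.rev), (Matrix.mem_orthogonalGroup_iff' _ _).mp hA.1, hA.2,
      (Matrix.mem_orthogonalGroup_iff' _ _).mp hB.1, hB.2, h,
      Matrix.charpoly_transpose_mul_self_of_eq_mul_diagonal_mul hB.1 hA.1 h,
      fun h' => (hM.not_ge h').elim, fun _ => ⟨?_, ?_, ?_⟩⟩ <;>
    simp only [Pi.neg_apply, Function.comp_apply, neg_le_neg_iff, Left.neg_nonpos_iff]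
    exacts [hσ _, hanti (by decide), hanti (by decide)]
end

section
/- Let A be a real 3×3 matrix with AᵀA = 1 and det A = 1 (a rotation matrix). Then there exists a unitary 2×2 complex matrix U such that for every r = (r₁, r₂, r₃) ∈ ℝ³, U * (∑_{i=1}^3 r_i • σ_i) * Uᴴ = ∑_{i=1}^3 (A r)_i • σ_i; equivalently, U * ((σ_0 + ∑_i r_i • σ_i)/2) * Uᴴ = (σ_0 + ∑_i (A r)_i • σ_i)/2 for all r. -/
/-!
Every rotation factors into Euler angles as `Rz α * Ry β * Rz γ`: choose `α, β` so that
`Rz α * Ry β` has the same third column as `A`; the remaining factor then fixes `e₃` and is a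
rotation about the `z`-axis. Conjugation by `diag(e^{-iφ}, e^{iφ})`, resp. by the real rotation
`[[cos φ, -sin φ], [sin φ, cos φ]]`, acts on the Pauli vector as the rotation by `2φ` about the
`z`-, resp. `y`-axis, and such implementations compose.
-/

open scoped Matrix

open Complex Matrix

noncomputable section

def rotZ (θ : ℝ) : Matrix (Fin 3) (Fin 3) ℝ :=
  !![Real.cos θ, -Real.sin θ, 0; Real.sin θ, Real.cos θ, 0; 0, 0, 1]

def rotY (θ : ℝ) : Matrix (Fin 3) (Fin 3) ℝ :=
  !![Real.cos θ, 0, Real.sin θ; 0, 1, 0; -Real.sin θ, 0, Real.cos θ]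

def spinZ (φ : ℝ) : Matrix (Fin 2) (Fin 2) ℂ :=
  !![Real.cos φ - Real.sin φ * I, 0; 0, Real.cos φ + Real.sin φ * I]

def spinY (φ : ℝ) : Matrix (Fin 2) (Fin 2) ℂ :=
  !![(Real.cos φ : ℂ), -Real.sin φ; Real.sin φ, Real.cos φ]

end

section EulerAngles

theorem exists_polar_angle (x y : ℝ) :
    ∃ θ, √(x ^ 2 + y ^ 2) * Real.cos θ = x ∧ √(x ^ 2 + y ^ 2) * Real.sin θ = y := by
  have hnorm : ‖(⟨x, y⟩ : ℂ)‖ = √(x ^ 2 + y ^ 2) := by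
    simp [Complex.norm_def, Complex.normSq_apply, sq]
  exact ⟨arg ⟨x, y⟩, by rw [← hnorm, norm_mul_cos_arg], by rw [← hnorm, norm_mul_sin_arg]⟩

theorem exists_cos_sin_eq {x y : ℝ} (h : x ^ 2 + y ^ 2 = 1) :
    ∃ θ, Real.cos θ = x ∧ Real.sin θ = y := by
  simpa [h] using exists_polar_angle x y

theorem rotZ_mem_specialOrthogonalGroup (θ : ℝ) :
    rotZ θ ∈ specialOrthogonalGroup (Fin 3) ℝ := by
  have h := Real.sin_sq_add_cos_sq θ
  refine mem_specialOrthogonalGroup_iff.2 ⟨(mem_orthogonalGroup_iff _ _).2 ?_, ?_⟩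
  · ext i j
    fin_cases i <;> fin_cases j <;> simp [rotZ, mul_apply, Fin.sum_univ_three, one_apply] <;> grind
  · simp [rotZ, det_fin_three]
    grind

theorem rotY_mem_specialOrthogonalGroup (θ : ℝ) :
    rotY θ ∈ specialOrthogonalGroup (Fin 3) ℝ := by
  have h := Real.sin_sq_add_cos_sq θ
  refine mem_specialOrthogonalGroup_iff.2 ⟨(mem_orthogonalGroup_iff _ _).2 ?_, ?_⟩
  · ext i j
    fin_cases i <;> fin_cases j <;> simp [rotY, mul_apply, Fin.sum_univ_three, one_apply] <;> grind
  · simp [rotY, det_fin_three]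
    grind

theorem exists_rotZ_mul_rotY_apply_two {v : Fin 3 → ℝ} (hv : v 0 ^ 2 + v 1 ^ 2 + v 2 ^ 2 = 1) :
    ∃ α β, ∀ i, (rotZ α * rotY β) i 2 = v i := by
  obtain ⟨α, hα₀, hα₁⟩ := exists_polar_angle (v 0) (v 1)
  obtain ⟨β, hβ₀, hβ₁⟩ : ∃ β, Real.cos β = v 2 ∧ Real.sin β = √(v 0 ^ 2 + v 1 ^ 2) :=
    exists_cos_sin_eq (by rw [Real.sq_sqrt (by positivity)]; linarith)
  refine ⟨α, β, fun i => ?_⟩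
  fin_cases i <;> simp [rotZ, rotY, mul_apply, Fin.sum_univ_three, hβ₀, hβ₁] <;> linarith

theorem exists_eq_rotZ_of_apply_two {B : Matrix (Fin 3) (Fin 3) ℝ}
    (hB : B ∈ specialOrthogonalGroup (Fin 3) ℝ) (h₀ : B 0 2 = 0) (h₁ : B 1 2 = 0)
    (h₂ : B 2 2 = 1) : ∃ γ, B = rotZ γ := by
  obtain ⟨hO, hdet⟩ := mem_specialOrthogonalGroup_iff.1 hB
  have hrows := congrFun₂ ((mem_orthogonalGroup_iff _ _).1 hO)
  have hcols := congrFun₂ ((mem_orthogonalGroup_iff' _ _).1 hO)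
  simp only [mul_apply, Fin.sum_univ_three, transpose_apply, one_apply] at hrows hcols
  have hrow₂ := hrows 2 2
  simp only [h₂, if_true] at hrow₂
  have h₂₀ : B 2 0 = 0 := by nlinarith
  have h₂₁ : B 2 1 = 0 := by nlinarith
  have hcol₀ := hcols 0 0
  have hcol₀₁ := hcols 0 1
  simp only [h₂₀, h₂₁, if_true, Fin.reduceEq, if_false] at hcol₀ hcol₀₁
  simp only [det_fin_three, h₀, h₁, h₂, h₂₀, h₂₁] at hdet
  obtain ⟨γ, hc, hs⟩ := exists_cos_sin_eq (x := B 0 0) (y := B 1 0) (by linarith)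
  have h₁₁ : B 1 1 = B 0 0 := by
    linear_combination B 0 0 * hdet + B 1 0 * hcol₀₁ - B 1 1 * hcol₀
  have h₀₁ : B 0 1 = -B 1 0 := by
    linear_combination -B 1 0 * hdet + B 0 0 * hcol₀₁ - B 0 1 * hcol₀
  refine ⟨γ, ?_⟩
  ext i j
  fin_cases i <;> fin_cases j <;> simp [rotZ, *]

theorem exists_eq_rotZ_mul_rotY_mul_rotZ {A : Matrix (Fin 3) (Fin 3) ℝ}
    (hA : A ∈ specialOrthogonalGroup (Fin 3) ℝ) :
    ∃ α β γ, A = rotZ α * rotY β * rotZ γ := by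
  have hcol : A 0 2 ^ 2 + A 1 2 ^ 2 + A 2 2 ^ 2 = 1 := by
    have hO := (mem_specialOrthogonalGroup_iff.1 hA).1
    simpa [mul_apply, Fin.sum_univ_three, sq, add_assoc]
      using congrFun₂ ((mem_orthogonalGroup_iff' _ _).1 hO) 2 2
  obtain ⟨α, β, hαβ⟩ := exists_rotZ_mul_rotY_apply_two (v := fun i => A i 2) hcol
  let R : specialOrthogonalGroup (Fin 3) ℝ :=
    ⟨_, mul_mem (rotZ_mem_specialOrthogonalGroup α) (rotY_mem_specialOrthogonalGroup β)⟩
  let B := R⁻¹ * ⟨A, hA⟩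
  have hB : ∀ i, (B : Matrix (Fin 3) (Fin 3) ℝ) i 2 = (1 : Matrix (Fin 3) (Fin 3) ℝ) i 2 := by
    intro i
    have hRR : ((R⁻¹ * R : specialOrthogonalGroup (Fin 3) ℝ) : Matrix (Fin 3) (Fin 3) ℝ) = 1 := by
      rw [inv_mul_cancel]
      rfl
    rw [← hRR]
    simp only [B, Submonoid.coe_mul, mul_apply]
    simp only [R, hαβ]
  obtain ⟨γ, hγ⟩ := exists_eq_rotZ_of_apply_two B.2 (hB 0) (hB 1) (hB 2)
  refine ⟨α, β, γ, ?_⟩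
  rw [← hγ]
  exact congrArg Subtype.val (mul_inv_cancel_left R ⟨A, hA⟩).symm

end EulerAngles

section SpinLift

def IsSpinLift (U : Matrix (Fin 2) (Fin 2) ℂ) (A : Matrix (Fin 3) (Fin 3) ℝ) : Prop :=
  U * Uᴴ = 1 ∧
    ∀ r : Fin 3 → ℝ, U * (∑ i, r i • pauli i.succ) * Uᴴ = ∑ i, A.mulVec r i • pauli i.succ

theorem IsSpinLift.mul {U V : Matrix (Fin 2) (Fin 2) ℂ} {A B : Matrix (Fin 3) (Fin 3) ℝ}
    (hU : IsSpinLift U A) (hV : IsSpinLift V B) : IsSpinLift (U * V) (A * B) := by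
  refine ⟨?_, fun r => ?_⟩
  · rw [conjTranspose_mul, mul_assoc, ← mul_assoc V, hV.1, one_mul, hU.1]
  · calc U * V * (∑ i, r i • pauli i.succ) * (U * V)ᴴ
        = U * (V * (∑ i, r i • pauli i.succ) * Vᴴ) * Uᴴ := by
          simp only [conjTranspose_mul, mul_assoc]
      _ = ∑ i, (A * B).mulVec r i • pauli i.succ := by rw [hV.2, hU.2, mulVec_mulVec]

theorem pauli_zero : pauli 0 = 1 := by
  ext i j
  fin_cases i <;> fin_cases j <;> rfl

theorem IsSpinLift.conj_smul_pauli_zero_add {U : Matrix (Fin 2) (Fin 2) ℂ}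
    {A : Matrix (Fin 3) (Fin 3) ℝ} (h : IsSpinLift U A) (c : ℝ) (r : Fin 3 → ℝ) :
    U * (c • (pauli 0 + ∑ i, r i • pauli i.succ)) * Uᴴ =
      c • (pauli 0 + ∑ i, A.mulVec r i • pauli i.succ) := by
  rw [Matrix.mul_smul, Matrix.smul_mul, mul_add, add_mul, pauli_zero, mul_one, h.1, h.2]

theorem sum_smul_pauli_succ (r : Fin 3 → ℝ) :
    ∑ i, r i • pauli i.succ = !![(r 2 : ℂ), r 0 - r 1 * I; r 0 + r 1 * I, -(r 2 : ℂ)] := by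
  ext i j
  fin_cases i <;> fin_cases j <;> simp [pauli, Fin.sum_univ_three, mul_comm, sub_eq_add_neg]

theorem isSpinLift_spinZ (θ : ℝ) : IsSpinLift (spinZ (θ / 2)) (rotZ θ) := by
  obtain ⟨φ, rfl⟩ : ∃ φ, θ = 2 * φ := ⟨θ / 2, by ring⟩
  rw [mul_div_cancel_left₀ φ two_ne_zero]
  have h := Real.sin_sq_add_cos_sq φ
  refine ⟨?_, fun r => ?_⟩
  · ext i j
    fin_cases i <;> fin_cases j <;>
      simp [-ofReal_cos, -ofReal_sin, spinZ, mul_apply, Complex.ext_iff] <;> grind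
  · rw [sum_smul_pauli_succ, sum_smul_pauli_succ]
    ext i j
    fin_cases i <;> fin_cases j <;>
      simp [-ofReal_cos, -ofReal_sin, -ofReal_pow, spinZ, rotZ, mul_apply, Complex.ext_iff,
        mulVec, dotProduct, Fin.sum_univ_three, Real.cos_two_mul', Real.sin_two_mul] <;> grind

theorem isSpinLift_spinY (θ : ℝ) : IsSpinLift (spinY (θ / 2)) (rotY θ) := by
  obtain ⟨φ, rfl⟩ : ∃ φ, θ = 2 * φ := ⟨θ / 2, by ring⟩
  rw [mul_div_cancel_left₀ φ two_ne_zero]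
  have h := Real.sin_sq_add_cos_sq φ
  refine ⟨?_, fun r => ?_⟩
  · ext i j
    fin_cases i <;> fin_cases j <;>
      simp [-ofReal_cos, -ofReal_sin, spinY, mul_apply, Complex.ext_iff] <;> grind
  · rw [sum_smul_pauli_succ, sum_smul_pauli_succ]
    ext i j
    fin_cases i <;> fin_cases j <;>
      simp [-ofReal_cos, -ofReal_sin, -ofReal_pow, spinY, rotY, mul_apply, Complex.ext_iff,
        mulVec, dotProduct, Fin.sum_univ_three, Real.cos_two_mul', Real.sin_two_mul] <;> grind

end SpinLift

theorem stmt_10 (A : Matrix (Fin 3) (Fin 3) ℝ) (hA : Aᵀ * A = 1) (hdet : A.det = 1) :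
    ∃ U : Matrix (Fin 2) (Fin 2) ℂ, U * Uᴴ = 1 ∧
      (∀ r : Fin 3 → ℝ,
        U * (∑ i : Fin 3, r i • pauli i.succ) * Uᴴ =
          ∑ i : Fin 3, A.mulVec r i • pauli i.succ) ∧
      (∀ r : Fin 3 → ℝ,
        U * (((1 : ℝ) / 2) • (pauli 0 + ∑ i : Fin 3, r i • pauli i.succ)) * Uᴴ =
          ((1 : ℝ) / 2) • (pauli 0 + ∑ i : Fin 3, A.mulVec r i • pauli i.succ)) := by
  obtain ⟨α, β, γ, rfl⟩ := exists_eq_rotZ_mul_rotY_mul_rotZ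
    (mem_specialOrthogonalGroup_iff.2 ⟨(mem_orthogonalGroup_iff' _ _).2 hA, hdet⟩)
  have hU := ((isSpinLift_spinZ α).mul (isSpinLift_spinY β)).mul (isSpinLift_spinZ γ)
  exact ⟨_, hU.1, hU.2, hU.conj_smul_pauli_zero_add _⟩
end

section
/- Let N ≥ 1 and let U be a unitary N×N complex matrix. Consider the real vector space V of traceless self-adjoint N×N complex matrices (X with Xᴴ = X and trace X = 0), and let T : V → V be the ℝ-linear map T(X) = U * X * Uᴴ. Then T is an isometry for the Frobenius (Hilbert–Schmidt) norm — i.e., trace((T X)ᴴ * (T X)) = trace(Xᴴ * X) for all X ∈ V — and the determinant of T as an ℝ-linear endomorphism of V equals 1. In particular, the Bloch matrix of a unitary quantum operator is a rotation. -/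
/-!
Conjugation `X ↦ U X Uᴴ` is a `ℂ`-linear map of all matrices, of determinant
`(det U · det Uᴴ) ^ N = 1`. It preserves the Hermitian matrices, which form a real form of the
complex matrices: a real basis of them is a complex basis of all matrices, so the restricted
real map has the same matrix and hence determinant `1`. The Hermitian matrices split as
`ℝ • 1 ⊕ (traceless part)`, and conjugation fixes `1`, so its determinant on the traceless part
is `1` as well. The isometry statement is the cyclicity of the trace.
-/

open scoped Matrix ComplexStarModule

/-- The real vector space of traceless self-adjoint `N × N` complex matrices. -/
noncomputable def tracelessSelfAdjoint (N : ℕ) : Submodule ℝ (Matrix (Fin N) (Fin N) ℂ) where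
  carrier := {X | Xᴴ = X ∧ X.trace = 0}
  add_mem' := by
    rintro X Y ⟨hX1, hX2⟩ ⟨hY1, hY2⟩
    exact ⟨by rw [Matrix.conjTranspose_add, hX1, hY1],
      by rw [Matrix.trace_add, hX2, hY2, add_zero]⟩
  zero_mem' := ⟨by simp, by simp⟩
  smul_mem' := by
    rintro c X ⟨hX1, hX2⟩
    exact ⟨by rw [Matrix.conjTranspose_smul, star_trivial, hX1],
      by rw [Matrix.trace_smul, hX2, smul_zero]⟩

theorem LinearMap.det_eq_det_restrict_of_isCompl {K V : Type*} [Field K] [AddCommGroup V]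
    [Module K V] [FiniteDimensional K V] (f : V →ₗ[K] V) {p q : Submodule K V}
    (hpq : IsCompl p q) (hp : ∀ x ∈ p, f x = x) (hq : ∀ x ∈ q, f x ∈ q) :
    f.det = (f.restrict hq).det := by
  let e := Submodule.prodEquivOfIsCompl p q hpq
  have h : f = e.toLinearMap ∘ₗ LinearMap.id.prodMap (f.restrict hq) ∘ₗ e.symm.toLinearMap := by
    ext x
    obtain ⟨y, rfl⟩ := e.surjective x
    simp [e, hp]
  calc f.det = (e.toLinearMap ∘ₗ LinearMap.id.prodMap (f.restrict hq) ∘ₗ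
        e.symm.toLinearMap).det := congrArg _ h
    _ = (f.restrict hq).det := by rw [det_conj, det_prodMap, det_id, one_mul]

section MatrixMultiplication

variable {n R : Type*} [Fintype n] [DecidableEq n] [CommRing R]

open Matrix

theorem LinearMap.det_mulRight_matrix (A : Matrix n n R) :
    (LinearMap.mulRight R A).det = A.det ^ Fintype.card n := by
  have h : LinearMap.mulRight R A = (ofLinearEquiv R).toLinearMap ∘ₗ
      LinearMap.pi (fun i => (toLin' Aᵀ).comp (LinearMap.proj i)) ∘ₗ
      (ofLinearEquiv R).symm.toLinearMap := by
    ext X i j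
    simp [Matrix.mul_apply, Matrix.mulVec, dotProduct, mul_comm]
  rw [h, LinearMap.det_conj, LinearMap.det_pi]
  simp

theorem LinearMap.det_mulLeft_matrix (A : Matrix n n R) :
    (LinearMap.mulLeft R A).det = A.det ^ Fintype.card n := by
  have h : LinearMap.mulLeft R A = (transposeLinearEquiv n n R R).toLinearMap ∘ₗ
      LinearMap.mulRight R Aᵀ ∘ₗ (transposeLinearEquiv n n R R).symm.toLinearMap := by
    ext X : 1
    simp [transpose_mul]
  rw [h, LinearMap.det_conj, det_mulRight_matrix, det_transpose]

theorem LinearMap.det_mulLeftRight_matrix (A B : Matrix n n R) :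
    (LinearMap.mulLeftRight R (A, B)).det = (A.det * B.det) ^ Fintype.card n := by
  rw [LinearMap.mulLeftRight, LinearMap.det_comp, det_mulRight_matrix, det_mulLeft_matrix,
    mul_pow, mul_comm]

end MatrixMultiplication

section ComplexStarModule

variable {A : Type*} [AddCommGroup A] [Module ℂ A] [StarAddMonoid A] [StarModule ℂ A]

theorem LinearIndependent.complex_of_isSelfAdjoint {ι : Type*} {v : ι → A}
    (hsa : ∀ i, IsSelfAdjoint (v i)) (hv : LinearIndependent ℝ v) :
    LinearIndependent ℂ v := by
  rw [linearIndependent_iff'] at hv ⊢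
  intro s c hc i hi
  have hre : ∑ j ∈ s, (c j).re • v j = 0 := by
    simpa [realPart_smul, (hsa _).coe_realPart, (hsa _).imaginaryPart] using
      congrArg (fun x => (ℜ x : A)) hc
  have him : ∑ j ∈ s, (c j).im • v j = 0 := by
    simpa [imaginaryPart_smul, (hsa _).coe_realPart, (hsa _).imaginaryPart] using
      congrArg (fun x => (ℑ x : A)) hc
  exact Complex.ext (hv s _ hre i hi) (hv s _ him i hi)

theorem Module.Basis.span_complex_coe_selfAdjoint {ι : Type*}
    (b : Module.Basis ι ℝ (selfAdjoint.submodule ℝ A)) :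
    Submodule.span ℂ (Set.range fun i => (b i : A)) = ⊤ := by
  rw [eq_top_iff, ← span_selfAdjoint, Submodule.span_le]
  intro x hx
  have : x ∈ (Submodule.span ℝ (Set.range b)).map (selfAdjoint.submodule ℝ A).subtype := by
    rwa [b.span_eq, Submodule.map_subtype_top]
  rw [Submodule.map_span, ← Set.range_comp] at this
  exact Submodule.span_le_restrictScalars ℝ ℂ _ this

noncomputable def Module.Basis.complexOfSelfAdjoint {ι : Type*}
    (b : Module.Basis ι ℝ (selfAdjoint.submodule ℝ A)) : Module.Basis ι ℂ A :=
  .mk (LinearIndependent.complex_of_isSelfAdjoint (fun i => (b i).2)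
      (b.linearIndependent.map' _ (Submodule.ker_subtype _)))
    b.span_complex_coe_selfAdjoint.ge

@[simp]
theorem Module.Basis.complexOfSelfAdjoint_apply {ι : Type*}
    (b : Module.Basis ι ℝ (selfAdjoint.submodule ℝ A)) (i : ι) :
    b.complexOfSelfAdjoint i = b i :=
  Module.Basis.mk_apply _ _ _

theorem LinearMap.det_restrict_selfAdjoint [FiniteDimensional ℂ A] (f : A →ₗ[ℂ] A)
    (hf : ∀ x ∈ selfAdjoint.submodule ℝ A, f x ∈ selfAdjoint.submodule ℝ A) :
    (((f.restrictScalars ℝ).restrict hf).det : ℂ) = f.det := by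
  let b := Module.finBasis ℝ (selfAdjoint.submodule ℝ A)
  let bC := b.complexOfSelfAdjoint
  set S := (f.restrictScalars ℝ).restrict hf
  have hmat : toMatrix bC bC f = (toMatrix b b S).map (↑) := by
    ext i j
    have hfj : f (bC j) = ∑ k, (toMatrix b b S k j : ℂ) • bC k := by
      calc f (bC j) = (S (b j) : A) := by rw [b.complexOfSelfAdjoint_apply]; rfl
        _ = ∑ k, b.repr (S (b j)) k • (b k : A) := by
          conv_lhs => rw [← b.sum_repr (S (b j))]
          rw [Submodule.coe_sum]; rfl
        _ = _ := by simp [bC, toMatrix_apply, Complex.coe_smul]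
    rw [toMatrix_apply, hfj, bC.repr_sum_self, Matrix.map_apply]
  rw [← det_toMatrix bC, hmat, ← det_toMatrix b]
  exact RingHom.map_det Complex.ofRealHom _

end ComplexStarModule

namespace Matrix

variable {n : Type*} [Fintype n] [DecidableEq n]

theorem trace_conjTranspose_mul_self_conj {R : Type*} [CommRing R] [StarRing R]
    {U : Matrix n n R} (hU : Uᴴ * U = 1) (X : Matrix n n R) :
    ((U * X * Uᴴ)ᴴ * (U * X * Uᴴ)).trace = (Xᴴ * X).trace := by
  calc ((U * X * Uᴴ)ᴴ * (U * X * Uᴴ)).trace = (U * Xᴴ * (Uᴴ * U) * X * Uᴴ).trace := by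
        simp only [conjTranspose_mul, conjTranspose_conjTranspose, Matrix.mul_assoc]
    _ = (U * (Xᴴ * X) * Uᴴ).trace := by rw [hU, Matrix.mul_one]; simp only [Matrix.mul_assoc]
    _ = (Uᴴ * U * (Xᴴ * X)).trace := by rw [trace_mul_comm, Matrix.mul_assoc]
    _ = (Xᴴ * X).trace := by rw [hU, Matrix.one_mul]

noncomputable def conjSelfAdjoint (U : Matrix n n ℂ) :
    selfAdjoint.submodule ℝ (Matrix n n ℂ) →ₗ[ℝ] selfAdjoint.submodule ℝ (Matrix n n ℂ) :=
  ((LinearMap.mulLeftRight ℂ (U, Uᴴ)).restrictScalars ℝ).restrict fun _ hX => hX.conjugate U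

@[simp]
theorem coe_conjSelfAdjoint_apply (U : Matrix n n ℂ)
    (X : selfAdjoint.submodule ℝ (Matrix n n ℂ)) :
    (conjSelfAdjoint U X : Matrix n n ℂ) = U * X * Uᴴ :=
  rfl

theorem det_conjSelfAdjoint {U : Matrix n n ℂ} (hU : U * Uᴴ = 1) :
    (conjSelfAdjoint U).det = 1 := by
  have h := (LinearMap.mulLeftRight ℂ (U, Uᴴ)).det_restrict_selfAdjoint
    fun _ hX => hX.conjugate U
  rw [LinearMap.det_mulLeftRight_matrix, ← det_mul, hU, det_one, one_pow] at h
  exact_mod_cast h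

end Matrix

theorem isCompl_span_one_tracelessSelfAdjoint {N : ℕ} (hN : N ≠ 0) :
    IsCompl (ℝ ∙ (⟨1, .one _⟩ : selfAdjoint.submodule ℝ (Matrix (Fin N) (Fin N) ℂ)))
      ((tracelessSelfAdjoint N).comap (selfAdjoint.submodule ℝ _).subtype) := by
  constructor
  · rw [Submodule.disjoint_def]
    rintro x hx ⟨-, htr⟩
    obtain ⟨c, rfl⟩ := Submodule.mem_span_singleton.mp hx
    simp_all
  · rw [Submodule.codisjoint_iff_exists_add_eq]
    intro x
    set one : selfAdjoint.submodule ℝ (Matrix (Fin N) (Fin N) ℂ) := ⟨1, .one _⟩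
    set X : Matrix (Fin N) (Fin N) ℂ := ↑x
    set t := X.trace.re / N
    refine ⟨t • one, x - t • one, Submodule.smul_mem _ _ (Submodule.mem_span_singleton_self _),
      ⟨(x - t • one).2, ?_⟩, add_sub_cancel _ _⟩
    have hreal : (X.trace.re : ℂ) = X.trace := Complex.conj_eq_iff_re.mp <| by
      rw [starRingEnd_apply, ← Matrix.trace_conjTranspose]
      exact congrArg _ x.2
    simp [one, t, X, Matrix.trace_sub, hreal, hN]

theorem stmt_11 (N : ℕ) (hN : 1 ≤ N)
    (U : Matrix (Fin N) (Fin N) ℂ) (hU : U * Uᴴ = 1)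
    (T : tracelessSelfAdjoint N →ₗ[ℝ] tracelessSelfAdjoint N)
    (hT : ∀ X : tracelessSelfAdjoint N,
      (T X : Matrix (Fin N) (Fin N) ℂ) = U * (X : Matrix (Fin N) (Fin N) ℂ) * Uᴴ) :
    (∀ X : tracelessSelfAdjoint N,
      ((T X : Matrix (Fin N) (Fin N) ℂ)ᴴ * (T X : Matrix (Fin N) (Fin N) ℂ)).trace =
        ((X : Matrix (Fin N) (Fin N) ℂ)ᴴ * (X : Matrix (Fin N) (Fin N) ℂ)).trace) ∧
    LinearMap.det T = 1 := by
  have hUU : Uᴴ * U = 1 := mul_eq_one_comm.mp hU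
  refine ⟨fun X => by rw [hT]; exact Matrix.trace_conjTranspose_mul_self_conj hUU _, ?_⟩
  let H := selfAdjoint.submodule ℝ (Matrix (Fin N) (Fin N) ℂ)
  let S := Matrix.conjSelfAdjoint U
  have hp : ∀ X ∈ ℝ ∙ (⟨1, .one _⟩ : H), S X = X := by
    intro X hX
    obtain ⟨c, rfl⟩ := Submodule.mem_span_singleton.mp hX
    ext1
    simp [S, hU]
  have hq : ∀ X ∈ (tracelessSelfAdjoint N).comap H.subtype,
      S X ∈ (tracelessSelfAdjoint N).comap H.subtype := by
    rintro X ⟨-, htr⟩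
    refine ⟨(S X).2, ?_⟩
    change (U * X * Uᴴ).trace = 0
    rwa [Matrix.trace_mul_cycle, hUU, Matrix.one_mul]
  let e := Submodule.comapSubtypeEquivOfLe (p := tracelessSelfAdjoint N) (q := H)
    fun _ hX => hX.1
  have hTS : e.toLinearMap ∘ₗ S.restrict hq ∘ₗ e.symm.toLinearMap = T :=
    LinearMap.ext fun X => Subtype.ext (hT X).symm
  have hS : S.det = 1 := Matrix.det_conjSelfAdjoint hU
  rwa [S.det_eq_det_restrict_of_isCompl (isCompl_span_one_tracelessSelfAdjoint (by omega)) hp hq,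
    ← LinearMap.det_conj _ e, hTS] at hS
end
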